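/- Let Λ ∈ ℝ^{k×m} have all entries nonnegative, let P ∈ ℝ^{k×k} be symmetric with all entries nonnegative, and suppose −Q − P + ΛFᵀ + FΛᵀ is positive semidefinite. Let M ∈ ℝ be any number such that 2(d + Λw)ᵀy ≤ M for every y ∈ ℝ^k with Fᵀy ≤ w and y ≥ 0. Then for every DNN-feasible matrix X, ⟨Ĥ, X⟩ ≤ v + M. In particular, the optimal value of the DNN relaxation is at most v + max{2(d + Λw)ᵀy : Fᵀy ≤ w, y ≥ 0}. -/

import Mathlib

/-!
Write `Y` for the top-left `k × k` block of `X` and `x` for the first `k` entries of its last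
column. The constraints on `M₀` say that `uᵢ = M₀ᵢ - wᵢ e` satisfies `uᵢᵀ X uᵢ = 0`, so positive
semidefiniteness forces `X uᵢ = 0`. Read row by row, and using that the slack blocks of `X` are
nonnegative, this gives `Fᵀ x ≤ w` and `Y F ≤ x wᵀ`. By Schur's product theorem the certificate
gives `⟨Q, Y⟩ ≤ ⟨ΛFᵀ + FΛᵀ - P, Y⟩ ≤ 2⟨Λ, Y F⟩ ≤ 2 (Λw)ᵀx`, hence
`⟨Ĥ, X⟩ = ⟨Q, Y⟩ + 2 dᵀx + v ≤ v + 2 (d + Λw)ᵀx ≤ v + M`, as `x ≥ 0` is feasible for `M`.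
-/

open Matrix

noncomputable section

/-- Frobenius (trace) inner product of real matrices. -/
def frob {ι : Type} [Fintype ι] (A B : Matrix ι ι ℝ) : ℝ := (Aᵀ * B).trace

/-- The matrix `M₀ = [Fᵀ  I_m  0]`. -/
def Mzero {k m : ℕ} (F : Matrix (Fin k) (Fin m) ℝ) :
    Matrix (Fin m) ((Fin k ⊕ Fin m) ⊕ Unit) ℝ :=
  Matrix.of fun i j =>
    Sum.elim (Sum.elim (fun a => F a i) (fun b => if b = i then (1 : ℝ) else 0))
      (fun _ => (0 : ℝ)) j

/-- `X` is feasible for the doubly nonnegative (DNN) relaxation with data `(F, w)`. -/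
def DNNFeasible {k m : ℕ} (F : Matrix (Fin k) (Fin m) ℝ) (w : Fin m → ℝ)
    (X : Matrix ((Fin k ⊕ Fin m) ⊕ Unit) ((Fin k ⊕ Fin m) ⊕ Unit) ℝ) : Prop :=
  (∀ i j, 0 ≤ X i j) ∧
  X.PosSemidef ∧
  X (Sum.inr ()) (Sum.inr ()) = 1 ∧
  ((Mzero F).mulVec (fun j => X j (Sum.inr ())) = w) ∧
  (∀ i, (Mzero F * X * (Mzero F)ᵀ) i i = w i * w i)

/-- The objective matrix `Ĥ` of the DNN relaxation. -/
def Hhat {k m : ℕ} (Q : Matrix (Fin k) (Fin k) ℝ) (d : Fin k → ℝ) (v : ℝ) :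
    Matrix ((Fin k ⊕ Fin m) ⊕ Unit) ((Fin k ⊕ Fin m) ⊕ Unit) ℝ :=
  fromBlocks (fromBlocks Q 0 0 0)
    (Matrix.of fun i _ => Sum.elim d (fun _ => (0 : ℝ)) i)
    (Matrix.of fun _ j => Sum.elim d (fun _ => (0 : ℝ)) j)
    (Matrix.of fun _ _ => v)

section Frobenius

variable {ι : Type} [Fintype ι]

lemma frob_eq_sum (A B : Matrix ι ι ℝ) : frob A B = ∑ i, ∑ j, A i j * B i j := by
  simp only [frob, trace, diag, mul_apply, transpose_apply]
  exact Finset.sum_comm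

lemma frob_add_left (A B C : Matrix ι ι ℝ) : frob (A + B) C = frob A C + frob B C := by
  simp only [frob, transpose_add, Matrix.add_mul, trace_add]

lemma frob_sub_left (A B C : Matrix ι ι ℝ) : frob (A - B) C = frob A C - frob B C := by
  simp only [frob, transpose_sub, Matrix.sub_mul, trace_sub]

lemma frob_neg_left (A B : Matrix ι ι ℝ) : frob (-A) B = -frob A B := by
  simp only [frob, transpose_neg, Matrix.neg_mul, trace_neg]

lemma frob_nonneg_of_posSemidef {A B : Matrix ι ι ℝ} (hA : A.PosSemidef) (hB : B.PosSemidef) :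
    0 ≤ frob A B := by
  simpa [frob_eq_sum, dotProduct, mulVec, Finset.mul_sum] using
    (hA.hadamard hB).dotProduct_mulVec_nonneg 1

lemma frob_nonneg_of_nonneg {A B : Matrix ι ι ℝ} (hA : ∀ i j, 0 ≤ A i j) (hB : ∀ i j, 0 ≤ B i j) :
    0 ≤ frob A B := by
  rw [frob_eq_sum]
  exact Finset.sum_nonneg fun i _ => Finset.sum_nonneg fun j _ => mul_nonneg (hA i j) (hB i j)

lemma frob_transpose_left {A B : Matrix ι ι ℝ} (hB : B.IsSymm) : frob Aᵀ B = frob A B := by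
  rw [frob, frob, transpose_transpose, ← trace_transpose, transpose_mul, hB.eq, trace_mul_comm]

lemma frob_mul_transpose {κ : Type} [Fintype κ] (Λ F : Matrix ι κ ℝ) (Y : Matrix ι ι ℝ) :
    frob (Λ * Fᵀ) Y = ∑ a, ∑ i, Λ a i * (Y * F) a i := by
  rw [frob, transpose_mul, transpose_transpose, trace_mul_cycle, trace_mul_comm]
  simp only [trace, diag, mul_apply, transpose_apply]
  exact Finset.sum_comm

end Frobenius

lemma Matrix.PosSemidef.mulVec_eq_smul_mulVec {n : Type} [Fintype n] {X : Matrix n n ℝ}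
    (hX : X.PosSemidef) {u e : n → ℝ} {c : ℝ} (he : e ⬝ᵥ X *ᵥ e = 1) (hue : u ⬝ᵥ X *ᵥ e = c)
    (hu : u ⬝ᵥ X *ᵥ u = c * c) : X *ᵥ u = c • X *ᵥ e := by
  have heu : e ⬝ᵥ X *ᵥ u = c := by
    rw [dotProduct_mulVec, ← mulVec_transpose, dotProduct_comm,
      (isHermitian_iff_isSymm.mp hX.isHermitian).eq, hue]
  have h := (hX.dotProduct_mulVec_zero_iff (u - c • e)).mp (by
    simp only [star_trivial, mulVec_sub, mulVec_smul, sub_dotProduct, dotProduct_sub,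
      smul_dotProduct, dotProduct_smul, smul_eq_mul, he, hue, heu, hu]
    ring)
  rwa [mulVec_sub, sub_eq_zero, mulVec_smul] at h

lemma frob_le_of_certificate {ι κ : Type} [Fintype ι] [Fintype κ] {Q P Y : Matrix ι ι ℝ}
    {Λ F : Matrix ι κ ℝ} {x : ι → ℝ} {w : κ → ℝ} (hY : Y.PosSemidef) (hYnn : ∀ a b, 0 ≤ Y a b)
    (hΛ : ∀ a i, 0 ≤ Λ a i) (hP : ∀ a b, 0 ≤ P a b)
    (hcert : (-Q - P + Λ * Fᵀ + F * Λᵀ).PosSemidef) (hYF : ∀ a i, (Y * F) a i ≤ x a * w i) :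
    frob Q Y ≤ 2 * ((Λ *ᵥ w) ⬝ᵥ x) := by
  have hY_symm : Y.IsSymm := isHermitian_iff_isSymm.mp hY.isHermitian
  have hsplit : frob (-Q - P + Λ * Fᵀ + F * Λᵀ) Y
      = -frob Q Y - frob P Y + 2 * frob (Λ * Fᵀ) Y := by
    have hswap : frob (F * Λᵀ) Y = frob (Λ * Fᵀ) Y := by
      rw [← frob_transpose_left hY_symm, transpose_mul, transpose_transpose]
    rw [frob_add_left, frob_add_left, frob_sub_left, frob_neg_left, hswap]
    ring
  have hΛF : frob (Λ * Fᵀ) Y ≤ (Λ *ᵥ w) ⬝ᵥ x :=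
    calc frob (Λ * Fᵀ) Y = ∑ a, ∑ i, Λ a i * (Y * F) a i := frob_mul_transpose Λ F Y
      _ ≤ ∑ a, ∑ i, Λ a i * (x a * w i) := by
        gcongr with a _ i _
        exacts [hΛ a i, hYF a i]
      _ = (Λ *ᵥ w) ⬝ᵥ x := by
        simp only [dotProduct, mulVec, Finset.sum_mul]
        exact Finset.sum_congr rfl fun a _ => Finset.sum_congr rfl fun i _ => by ring
  linarith [frob_nonneg_of_posSemidef hcert hY, frob_nonneg_of_nonneg hP hYnn]

section Blocks

variable {α β : Type}

def xxBlock (X : Matrix ((α ⊕ β) ⊕ Unit) ((α ⊕ β) ⊕ Unit) ℝ) : Matrix α α ℝ :=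
  X.submatrix (fun a => Sum.inl (Sum.inl a)) (fun a => Sum.inl (Sum.inl a))

def xCol (X : Matrix ((α ⊕ β) ⊕ Unit) ((α ⊕ β) ⊕ Unit) ℝ) : α → ℝ :=
  fun a => X (Sum.inl (Sum.inl a)) (Sum.inr ())

end Blocks

section DNNFeasible

variable {k m : ℕ} {F : Matrix (Fin k) (Fin m) ℝ} {w : Fin m → ℝ}
  {X : Matrix ((Fin k ⊕ Fin m) ⊕ Unit) ((Fin k ⊕ Fin m) ⊕ Unit) ℝ}

lemma Mzero_mulVec_apply (F : Matrix (Fin k) (Fin m) ℝ) (g : (Fin k ⊕ Fin m) ⊕ Unit → ℝ)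
    (i : Fin m) :
    (Mzero F *ᵥ g) i = (Fᵀ *ᵥ fun a => g (Sum.inl (Sum.inl a))) i + g (Sum.inl (Sum.inr i)) := by
  simp [Mzero, mulVec, dotProduct, Fintype.sum_sum_type, ite_mul]

lemma DNNFeasible.isSymm (hX : DNNFeasible F w X) : X.IsSymm :=
  isHermitian_iff_isSymm.mp hX.2.1.isHermitian

lemma DNNFeasible.Mzero_mulVec_row (hX : DNNFeasible F w X) (r : (Fin k ⊕ Fin m) ⊕ Unit) :
    Mzero F *ᵥ X r = X r (Sum.inr ()) • w := by
  obtain ⟨-, hpsd, hone, hlin, hquad⟩ := hX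
  ext i
  have hXcol : X *ᵥ Pi.single (Sum.inr ()) 1 = fun r => X r (Sum.inr ()) := mulVec_single_one _ _
  have hrow := hpsd.mulVec_eq_smul_mulVec (u := Mzero F i) (e := Pi.single (Sum.inr ()) 1)
    (c := w i) ?one ?lin ?quad
  case one => simpa [hXcol] using hone
  case lin => rw [hXcol, ← hlin]; rfl
  case quad =>
    rw [← hquad i]
    simp only [mul_apply, transpose_apply, dotProduct, mulVec, Finset.sum_mul, Finset.mul_sum]
    rw [Finset.sum_comm]
    exact Finset.sum_congr rfl fun _ _ => Finset.sum_congr rfl fun _ _ => by ring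
  have hr := congrFun hrow r
  rw [hXcol] at hr
  simp only [mulVec, dotProduct, Pi.smul_apply, smul_eq_mul] at hr ⊢
  rw [mul_comm, ← hr]
  exact Finset.sum_congr rfl fun _ _ => mul_comm _ _

lemma DNNFeasible.xxBlock_mul_le (hX : DNNFeasible F w X) (a : Fin k) (i : Fin m) :
    (xxBlock X * F) a i ≤ xCol X a * w i := by
  have h := congrFun (hX.Mzero_mulVec_row (Sum.inl (Sum.inl a))) i
  rw [Mzero_mulVec_apply] at h
  have hYF : (xxBlock X * F) a i
      = (Fᵀ *ᵥ fun b => X (Sum.inl (Sum.inl a)) (Sum.inl (Sum.inl b))) i := by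
    simp only [xxBlock, mul_apply, submatrix_apply, mulVec, dotProduct, transpose_apply, mul_comm]
  rw [hYF, xCol, ← smul_eq_mul, ← Pi.smul_apply, ← h]
  linarith [hX.1 (Sum.inl (Sum.inl a)) (Sum.inl (Sum.inr i))]

lemma DNNFeasible.transpose_mulVec_xCol_le (hX : DNNFeasible F w X) (i : Fin m) :
    (Fᵀ *ᵥ xCol X) i ≤ w i := by
  obtain ⟨hnn, -, -, hlin, -⟩ := hX
  have h := congrFun hlin i
  rw [Mzero_mulVec_apply] at h
  unfold xCol
  linarith [hnn (Sum.inl (Sum.inr i)) (Sum.inr ())]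

lemma DNNFeasible.frob_Hhat (hX : DNNFeasible F w X) (Q : Matrix (Fin k) (Fin k) ℝ)
    (d : Fin k → ℝ) (v : ℝ) :
    frob (Hhat Q d v) X = frob Q (xxBlock X) + 2 * (d ⬝ᵥ xCol X) + v := by
  simp only [frob_eq_sum, Fintype.sum_sum_type, Hhat, fromBlocks_apply₁₁, fromBlocks_apply₁₂,
    fromBlocks_apply₂₁, fromBlocks_apply₂₂, of_apply, Sum.elim_inl, Sum.elim_inr, Matrix.zero_apply,
    zero_mul, Finset.sum_const_zero, add_zero, Fintype.sum_unique, PUnit.default_eq_unit,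
    hX.isSymm.apply (Sum.inr ()), hX.2.2.1, xxBlock, xCol, submatrix_apply, dotProduct,
    Finset.sum_add_distrib]
  ring

end DNNFeasible

theorem dnn_bound_upper_bound_general {k m : ℕ}
    (F : Matrix (Fin k) (Fin m) ℝ) (w : Fin m → ℝ)
    (Q : Matrix (Fin k) (Fin k) ℝ) (d : Fin k → ℝ) (v : ℝ)
    (Λ : Matrix (Fin k) (Fin m) ℝ) (hΛ : ∀ i j, 0 ≤ Λ i j)
    (P : Matrix (Fin k) (Fin k) ℝ) (hPnn : ∀ i j, 0 ≤ P i j)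
    (hpsd : (-Q - P + Λ * Fᵀ + F * Λᵀ).PosSemidef)
    (M : ℝ)
    (hM : ∀ y : Fin k → ℝ, (∀ i, Fᵀ.mulVec y i ≤ w i) → (∀ i, 0 ≤ y i) →
      2 * ((fun i => d i + Λ.mulVec w i) ⬝ᵥ y) ≤ M)
    (X : Matrix ((Fin k ⊕ Fin m) ⊕ Unit) ((Fin k ⊕ Fin m) ⊕ Unit) ℝ)
    (hX : DNNFeasible F w X) :
    frob (Hhat (m := m) Q d v) X ≤ v + M := by
  have hQY : frob Q (xxBlock X) ≤ 2 * ((Λ *ᵥ w) ⬝ᵥ xCol X) :=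
    frob_le_of_certificate (hX.2.1.submatrix _) (fun _ _ => hX.1 _ _) hΛ hPnn hpsd
      hX.xxBlock_mul_le
  have hx : 2 * ((d + Λ *ᵥ w) ⬝ᵥ xCol X) ≤ M :=
    hM _ hX.transpose_mulVec_xCol_le fun _ => hX.1 _ _
  calc frob (Hhat Q d v) X = frob Q (xxBlock X) + 2 * (d ⬝ᵥ xCol X) + v := hX.frob_Hhat Q d v
    _ ≤ v + 2 * ((d + Λ *ᵥ w) ⬝ᵥ xCol X) := by rw [add_dotProduct]; linarith
    _ ≤ v + M := by linarith

/-- upper bound for the DNN relaxation value from a certificate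
`(Λ, P)` with `−Q − P + ΛFᵀ + FΛᵀ ⪰ 0`. -/
theorem dnn_bound_upper_bound {k m : ℕ} (hk : 1 ≤ k) (hm : 1 ≤ m)
    (F : Matrix (Fin k) (Fin m) ℝ) (w : Fin m → ℝ)
    (Q : Matrix (Fin k) (Fin k) ℝ) (hQ : Q.IsSymm) (d : Fin k → ℝ) (v : ℝ)
    (Λ : Matrix (Fin k) (Fin m) ℝ) (hΛ : ∀ i j, 0 ≤ Λ i j)
    (P : Matrix (Fin k) (Fin k) ℝ) (hPs : P.IsSymm) (hPnn : ∀ i j, 0 ≤ P i j)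
    (hpsd : (-Q - P + Λ * Fᵀ + F * Λᵀ).PosSemidef)
    (M : ℝ)
    (hM : ∀ y : Fin k → ℝ, (∀ i, Fᵀ.mulVec y i ≤ w i) → (∀ i, 0 ≤ y i) →
      2 * ((fun i => d i + Λ.mulVec w i) ⬝ᵥ y) ≤ M)
    (X : Matrix ((Fin k ⊕ Fin m) ⊕ Unit) ((Fin k ⊕ Fin m) ⊕ Unit) ℝ)
    (hX : DNNFeasible F w X) :
    frob (Hhat (m := m) Q d v) X ≤ v + M :=
  dnn_bound_upper_bound_general F w Q d v Λ hΛ P hPnn hpsd M hM X hX
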